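/- arXiv:math/0610685 — 3 statements merged into one kernel-verified Lean document; each statement's English description precedes it below -/
import Mathlib

section
/- The category of sheaves of objects of an abelian category 𝒜 on a finite poset X (with the downward-closed topology) is equivalent to the category of functors from X (viewed as a category) to 𝒜. -/
open CategoryTheory TopologicalSpace

namespace SheafPosetAux

open Topology

variable (X : Type) [PartialOrder X] [TopologicalSpace X] [Topology.IsUpperSet X]

/-- The minimal open neighborhood of a point. -/
def Umin (x : X) : Opens X :=
  ⟨Set.Ici x, (Topology.IsUpperSet.isOpen_iff_isUpperSet (α := X)).2 (isUpperSet_Ici x)⟩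

lemma mem_Umin {x y : X} : y ∈ Umin X x ↔ x ≤ y := Set.mem_Ici

lemma Umin_le_Umin {x y : X} (h : y ≤ x) : Umin X x ≤ Umin X y :=
  show (Set.Ici x : Set X) ⊆ Set.Ici y from Set.Ici_subset_Ici.2 h

lemma Umin_le {x : X} {U : Opens X} (hx : x ∈ U) : Umin X x ≤ U := by
  have hU : IsUpperSet (U : Set X) :=
    (Topology.IsUpperSet.isOpen_iff_isUpperSet (α := X)).1 U.2
  intro z hz
  exact hU ((mem_Umin X).1 hz) hx

/-- The functor sending `x` to its minimal open neighborhood. -/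
def minOpen : Xᵒᵖ ⥤ Opens X where
  obj x := Umin X x.unop
  map {x y} f := homOfLE (Umin_le_Umin X (leOfHom f.unop))

instance : (minOpen X).Faithful :=
  ⟨fun {_ _} _ _ _ => Subsingleton.elim _ _⟩

instance : (minOpen X).Full where
  map_surjective {x y} f := by
    have h : y.unop ≤ x.unop :=
      (mem_Umin X).1 ((leOfHom f) ((mem_Umin X).2 (le_refl x.unop)))
    exact ⟨(homOfLE h).op, Subsingleton.elim _ _⟩

instance : (minOpen X).IsCoverDense (Opens.grothendieckTopology X) := by
  constructor
  intro U y hy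
  exact ⟨Umin X y, homOfLE (Umin_le X hy),
    ⟨Opposite.op y, 𝟙 _, homOfLE (Umin_le X hy), rfl⟩, (mem_Umin X).2 le_rfl⟩

lemma induced_eq_bot :
    (minOpen X).inducedTopology (Opens.grothendieckTopology X) = ⊥ := by
  apply le_antisymm _ bot_le
  intro x S hS
  rw [GrothendieckTopology.bot_covering]
  rw [Functor.mem_inducedTopology_iff_of_isCoverDense] at hS
  obtain ⟨V, f, ⟨y, g, h, hg, hfact⟩, hxV⟩ := hS x.unop ((mem_Umin X).2 le_rfl)
  have hxy : x.unop ≤ y.unop := leOfHom g.unop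
  have hyx : y.unop ≤ x.unop := (mem_Umin X).1 ((leOfHom h) hxV)
  have hShom : S.arrows g := hg
  have : y = x := Opposite.unop_injective (le_antisymm hyx hxy)
  subst this
  rw [← Sieve.id_mem_iff_eq_top]
  have : g = 𝟙 y := Subsingleton.elim _ _
  rwa [this] at hShom

end SheafPosetAux

open CategoryTheory

/-- The category of sheaves with values in an abelian category `𝒜` on a finite poset `X`
(with the topology whose open sets are the upward-closed sets) is equivalent to the category
of functors from `X` (viewed as a category) to `𝒜`. -/
theorem sheaves_on_poset_equiv_functors (X : Type) [PartialOrder X] [Fintype X]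
    (𝒜 : Type*) [Category 𝒜] [Abelian 𝒜] :
    letI : TopologicalSpace X := Topology.upperSet X
    Nonempty (TopCat.Sheaf 𝒜 (TopCat.of X) ≌ (X ⥤ 𝒜)) := by
  letI : TopologicalSpace X := Topology.upperSet X
  haveI : Topology.IsUpperSet X := ⟨rfl⟩
  set G := SheafPosetAux.minOpen X with hG
  set K := Opens.grothendieckTopology X with hK
  haveI : ∀ (d : (Opens X)ᵒᵖ),
      Limits.HasLimitsOfShape (StructuredArrow d G.op) 𝒜 := by
    intro d
    haveI : Finite (Opens X) :=
      Finite.of_injective (fun U => (U : Set X)) fun _ _ h => Opens.ext h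
    haveI : Finite ((Xᵒᵖ)ᵒᵖ) :=
      Finite.of_equiv X (Opposite.equivToOpposite.trans Opposite.equivToOpposite)
    haveI : ∀ (a b : (Opens X)ᵒᵖ), Subsingleton (a ⟶ b) := fun _ _ =>
      ⟨fun _ _ => Quiver.Hom.unop_inj (Subsingleton.elim _ _)⟩
    haveI : ∀ (a b : (Opens X)ᵒᵖ), Finite (a ⟶ b) := fun _ _ =>
      Finite.of_subsingleton
    haveI : Finite (StructuredArrow d G.op) := by
      apply Finite.of_injective
        (fun s => (⟨s.right, s.hom⟩ : Σ c : (Xᵒᵖ)ᵒᵖ, (d ⟶ G.op.obj c)))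
      intro a b hab
      obtain ⟨al, ar, ah⟩ := a
      obtain ⟨bl, br, bh⟩ := b
      obtain ⟨h1, h2⟩ := Sigma.mk.inj_iff.1 hab
      dsimp at h1 h2
      subst h1
      cases eq_of_heq h2
      obtain ⟨⟨⟩⟩ := al
      obtain ⟨⟨⟩⟩ := bl
      rfl
    haveI : ∀ (a b : StructuredArrow d G.op), Finite (a ⟶ b) := fun a b =>
      Finite.of_injective (fun f => f.right)
        (fun f g h => StructuredArrow.hom_ext f g h)
    haveI : FinCategory (StructuredArrow d G.op) :=
      { fintypeObj := Fintype.ofFinite _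
        fintypeHom := fun a b => Fintype.ofFinite _ }
    infer_instance
  have e1 : TopCat.Sheaf 𝒜 (TopCat.of X) ≌ Sheaf (G.inducedTopology K) 𝒜 :=
    (G.sheafInducedTopologyEquivOfIsCoverDense K 𝒜).symm
  rw [SheafPosetAux.induced_eq_bot X] at e1
  have e2 : Sheaf (⊥ : GrothendieckTopology Xᵒᵖ) 𝒜 ≌ ((Xᵒᵖ)ᵒᵖ ⥤ 𝒜) :=
    sheafBotEquivalence 𝒜
  have e3 : ((Xᵒᵖ)ᵒᵖ ⥤ 𝒜) ≌ (X ⥤ 𝒜) := (opOpEquivalence X).congrLeft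
  exact ⟨e1.trans (e2.trans e3)⟩
end

section
/- The category of sheaves of finite-dimensional k-vector spaces on a finite poset X is equivalent to the category of finite-dimensional right modules over the incidence algebra kX. -/
open CategoryTheory
set_option synthInstance.maxHeartbeats 800000
set_option maxHeartbeats 1600000
set_option linter.unusedSectionVars false
attribute [local instance 10] Classical.propDecidable

def IncidenceAlg (k : Type*) [Field k] (X : Type*) [PartialOrder X] [Fintype X]
    [DecidableEq X] : Subalgebra k (Matrix X X k) where
  carrier := {M | ∀ x y : X, ¬ x ≤ y → M x y = 0}
  mul_mem' := by
    intro M N hM hN x y hxy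
    rw [Matrix.mul_apply]
    refine Finset.sum_eq_zero fun z _ => ?_
    by_cases hxz : x ≤ z
    · by_cases hzy : z ≤ y
      · exact absurd (hxz.trans hzy) hxy
      · rw [hN z y hzy, mul_zero]
    · rw [hM x z hxz, zero_mul]
  add_mem' := by
    intro M N hM hN x y hxy
    simp only [Matrix.add_apply, hM x y hxy, hN x y hxy, add_zero]
  algebraMap_mem' := by
    intro r x y hxy
    have hxy' : x ≠ y := fun h => hxy (h ▸ le_refl x)
    simp [Matrix.algebraMap_matrix_apply, hxy']

variable {k : Type} [Field k] {X : Type} [PartialOrder X] [Fintype X] [DecidableEq X]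

/-- matrix unit e_{xy} for x ≤ y -/
def IE (x y : X) (h : x ≤ y) : IncidenceAlg k X :=
  ⟨Matrix.single x y 1, by
    intro a b hab
    by_cases hax : a = x
    · by_cases hby : b = y
      · subst hax; subst hby; exact absurd h hab
      · simp only [Matrix.single, Matrix.of_apply, ite_eq_right_iff, and_imp]
        intro _ hyb; exact absurd hyb.symm hby
    · simp only [Matrix.single, Matrix.of_apply, ite_eq_right_iff, and_imp]
      intro hxa; exact absurd hxa.symm hax⟩

lemma IE_mul (x y z w : X) (h1 : x ≤ y) (h2 : z ≤ w) :
    (IE x y h1 : IncidenceAlg k X) * IE z w h2 =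
      if hyz : y = z then IE x w (h1.trans (hyz ▸ h2)) else 0 := by
  apply Subtype.ext
  show (Matrix.single x y (1:k)) * Matrix.single z w 1 = _
  split_ifs with hyz
  · subst hyz
    simp [Matrix.single_mul_single_same, IE]
  · push_cast
    rw [Matrix.single_mul_single_of_ne _ _ _ _ hyz]

lemma IE_sum_diag : (∑ x : X, IE x x le_rfl) = (1 : IncidenceAlg k X) := by
  apply Subtype.ext
  push_cast
  show (∑ x : X, Matrix.single x x (1:k)) = 1
  ext a b
  rw [Matrix.sum_apply]
  simp only [Matrix.single, Matrix.of_apply, Matrix.one_apply]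
  by_cases hab : a = b
  · subst hab
    rw [Finset.sum_eq_single a]
    · simp
    · intro c _ hc; simp [hc]
    · simp
  · rw [if_neg hab]
    refine Finset.sum_eq_zero fun c _ => ?_
    rw [if_neg]
    rintro ⟨rfl, rfl⟩; exact hab rfl


variable {k : Type} [Field k] {X : Type} [PartialOrder X] [Fintype X] [DecidableEq X]
variable (G : X ⥤ FGModuleCat k)

def mapLE {y x : X} (h : y ≤ x) : G.obj y →ₗ[k] G.obj x := (G.map (homOfLE h)).hom.hom

lemma mapLE_refl (x : X) (h : x ≤ x) : mapLE G h = LinearMap.id := by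
  have : homOfLE h = 𝟙 x := rfl
  show (G.map (homOfLE h)).hom.hom = _
  rw [this, G.map_id]; rfl

lemma mapLE_trans {y z x : X} (h1 : y ≤ z) (h2 : z ≤ x) (v : G.obj y) :
    mapLE G h2 (mapLE G h1 v) = mapLE G (h1.trans h2) v := by
  show (G.map (homOfLE h1) ≫ G.map (homOfLE h2)).hom.hom v = _
  rw [← G.map_comp]
  rfl

noncomputable def actF (M : Matrix X X k) (m : ∀ x, G.obj x) : ∀ x, G.obj x :=
  fun x => ∑ y, if h : y ≤ x then M y x • mapLE G h (m y) else 0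

lemma actF_add (M : Matrix X X k) (m n : ∀ x, G.obj x) :
    actF G M (m + n) = actF G M m + actF G M n := by
  funext x
  simp only [actF, Pi.add_apply, ← Finset.sum_add_distrib]
  refine Finset.sum_congr rfl fun y _ => ?_
  split_ifs with h
  · rw [map_add, smul_add]
  · rw [add_zero]

lemma actF_ksmul (M : Matrix X X k) (c : k) (m : ∀ x, G.obj x) :
    actF G M (c • m) = c • actF G M m := by
  funext x
  simp only [actF, Pi.smul_apply, Finset.smul_sum]
  refine Finset.sum_congr rfl fun y _ => ?_
  split_ifs with h
  · rw [map_smul, smul_comm]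
  · rw [smul_zero]

lemma actF_addM (M N : Matrix X X k) (m : ∀ x, G.obj x) :
    actF G (M + N) m = actF G M m + actF G N m := by
  funext x
  simp only [actF, Pi.add_apply, ← Finset.sum_add_distrib]
  refine Finset.sum_congr rfl fun y _ => ?_
  split_ifs with h
  · rw [Matrix.add_apply, add_smul]
  · rw [add_zero]

lemma actF_smulM (M : Matrix X X k) (c : k) (m : ∀ x, G.obj x) :
    actF G (c • M) m = c • actF G M m := by
  funext x
  simp only [actF, Pi.smul_apply, Finset.smul_sum]
  refine Finset.sum_congr rfl fun y _ => ?_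
  split_ifs with h
  · rw [Matrix.smul_apply, smul_assoc]
  · rw [smul_zero]

lemma actF_zeroM (m : ∀ x, G.obj x) : actF G 0 m = 0 := by
  funext x
  simp [actF]

lemma actF_zerom (M : Matrix X X k) : actF G M 0 = 0 := by
  funext x
  simp [actF]

lemma actF_one (m : ∀ x, G.obj x) : actF G 1 m = m := by
  funext x
  rw [actF, Finset.sum_eq_single x]
  · rw [dif_pos le_rfl, mapLE_refl, Matrix.one_apply_eq, one_smul]; rfl
  · intro y _ hy
    split_ifs with h
    · rw [Matrix.one_apply_ne hy, zero_smul]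
    · rfl
  · simp

lemma actF_mul (M N : Matrix X X k)
    (hM : M ∈ IncidenceAlg k X) (hN : N ∈ IncidenceAlg k X) (m : ∀ x, G.obj x) :
    actF G (M * N) m = actF G N (actF G M m) := by
  funext x
  show (∑ y, if h : y ≤ x then (M * N) y x • mapLE G h (m y) else 0)
    = ∑ z, if h : z ≤ x then N z x • mapLE G h (actF G M m z) else 0
  have rhs_eq : ∀ z : X, (if h : z ≤ x then N z x • mapLE G h (actF G M m z) else 0)
      = ∑ y, if hzx : z ≤ x then (if hyz : y ≤ z then
          (M y z * N z x) • mapLE G (hyz.trans hzx) (m y) else 0) else 0 := by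
    intro z
    split_ifs with hzx
    · rw [actF, map_sum, Finset.smul_sum]
      refine Finset.sum_congr rfl fun y _ => ?_
      split_ifs with hyz
      · rw [map_smul, mapLE_trans, smul_smul, mul_comm]
      · rw [map_zero, smul_zero]
    · rw [Finset.sum_const_zero]
  rw [Finset.sum_congr rfl fun z _ => rhs_eq z, Finset.sum_comm]
  refine Finset.sum_congr rfl fun y _ => ?_
  by_cases hyx : y ≤ x
  · rw [dif_pos hyx, Matrix.mul_apply, Finset.sum_smul]
    refine Finset.sum_congr rfl fun z _ => ?_
    by_cases hzx : z ≤ x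
    · rw [dif_pos hzx]
      by_cases hyz : y ≤ z
      · rw [dif_pos hyz]
      · rw [dif_neg hyz, hM y z hyz, zero_mul, zero_smul]
    · rw [dif_neg hzx, hN z x hzx, mul_zero, zero_smul]
  · rw [dif_neg hyx]
    refine (Finset.sum_eq_zero fun z _ => ?_).symm
    by_cases hzx : z ≤ x
    · rw [dif_pos hzx]
      by_cases hyz : y ≤ z
      · exact absurd (hyz.trans hzx) hyx
      · rw [dif_neg hyz]
    · rw [dif_neg hzx]
noncomputable instance piSMul : SMul (IncidenceAlg k X)ᵐᵒᵖ (∀ x, G.obj x) :=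
  ⟨fun a m => actF G ((a.unop : IncidenceAlg k X) : Matrix X X k) m⟩

lemma op_smul_def (a : (IncidenceAlg k X)ᵐᵒᵖ) (m : ∀ x, G.obj x) :
    a • m = actF G ((a.unop : IncidenceAlg k X) : Matrix X X k) m := rfl

noncomputable instance piModule : Module (IncidenceAlg k X)ᵐᵒᵖ (∀ x, G.obj x) where
  one_smul m := by rw [op_smul_def]; simp only [MulOpposite.unop_one, OneMemClass.coe_one]
                   exact actF_one G m
  mul_smul a b m := by
    simp only [op_smul_def, MulOpposite.unop_mul, MulMemClass.coe_mul]
    exact actF_mul G _ _ (b.unop).2 (a.unop).2 m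
  smul_zero a := actF_zerom G _
  smul_add a m n := actF_add G _ m n
  add_smul a b m := by
    simp only [op_smul_def, MulOpposite.unop_add, AddMemClass.coe_add]
    exact actF_addM G _ _ m
  zero_smul m := by
    simp only [op_smul_def, MulOpposite.unop_zero, ZeroMemClass.coe_zero]
    exact actF_zeroM G m

instance piTower : IsScalarTower k (IncidenceAlg k X)ᵐᵒᵖ (∀ x, G.obj x) :=
  ⟨fun c a m => by
    simp only [op_smul_def, MulOpposite.unop_smul, SetLike.val_smul]
    exact actF_smulM G _ c m⟩

instance piFinite : Module.Finite (IncidenceAlg k X)ᵐᵒᵖ (∀ x, G.obj x) :=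
  Module.Finite.of_restrictScalars_finite k _ _

lemma nat_mapLE {G H : X ⥤ FGModuleCat k} (η : G ⟶ H) {y x : X} (h : y ≤ x) (v : G.obj y) :
    η.app x (mapLE G h v) = mapLE H h (η.app y v) := by
  have := η.naturality (homOfLE h)
  exact congrArg (fun f => f.hom.hom v) this

noncomputable def Fsheaf : (X ⥤ FGModuleCat k) ⥤ FGModuleCat (IncidenceAlg k X)ᵐᵒᵖ where
  obj G := FGModuleCat.of _ (∀ x, G.obj x)
  map {G H} η := FGModuleCat.ofHom
    { toFun := fun m x => η.app x (m x)
      map_add' := fun m n => by funext x; exact map_add (η.app x).hom.hom _ _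
      map_smul' := fun a m => by
        funext x
        simp only [RingHom.id_apply]
        show (η.app x).hom.hom ((a • m) x) = (a • fun x => η.app x (m x)) x
        rw [op_smul_def, op_smul_def]
        show (η.app x).hom.hom (∑ y, _) = _
        rw [map_sum]
        refine Finset.sum_congr rfl fun y _ => ?_
        split_ifs with h
        · rw [map_smul]
          exact congrArg _ (nat_mapLE η h (m y))
        · exact map_zero _ }
  map_id G := by
    apply FGModuleCat.hom_ext
    apply LinearMap.ext; intro m; rfl
  map_comp f g := by
    apply FGModuleCat.hom_ext
    apply LinearMap.ext; intro m; rfl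
lemma actF_IE {y x : X} (h : y ≤ x) (m : ∀ x, G.obj x) :
    actF G ((IE y x h : IncidenceAlg k X) : Matrix X X k) m
      = Pi.single x (mapLE G h (m y)) := by
  funext x'
  show (∑ y', if h' : y' ≤ x' then
      (Matrix.single y x (1:k)) y' x' • mapLE G h' (m y') else 0) = _
  by_cases hx : x' = x
  · subst hx
    rw [Finset.sum_eq_single y]
    · rw [dif_pos h]
      simp [Matrix.single]
    · intro y' _ hy'
      split_ifs with h'
      · simp [Matrix.single, hy'.symm]
      · rfl
    · simp
  · rw [Pi.single_eq_of_ne hx]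
    refine Finset.sum_eq_zero fun y' _ => ?_
    split_ifs with h'
    · simp only [Matrix.single, Matrix.of_apply, ite_smul, one_smul, zero_smul,
        ite_eq_right_iff, and_imp]
      intro _ hxx'
      exact absurd hxx'.symm hx
    · rfl

lemma actF_algebraMap (c : k) (m : ∀ x, G.obj x) :
    actF G (algebraMap k (Matrix X X k) c) m = c • m := by
  have : algebraMap k (Matrix X X k) c = c • (1 : Matrix X X k) := by
    rw [Algebra.algebraMap_eq_smul_one]
  rw [this, actF_smulM, actF_one]

lemma ksmul_eq_op_smul (c : k) (m : ∀ x, G.obj x) :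
    c • m = (MulOpposite.op (algebraMap k (IncidenceAlg k X) c)) • m := by
  rw [op_smul_def, MulOpposite.unop_op]
  rw [show ((algebraMap k (IncidenceAlg k X) c : IncidenceAlg k X) : Matrix X X k)
      = algebraMap k (Matrix X X k) c from rfl]
  rw [actF_algebraMap]

instance Fsheaf_faithful : (Fsheaf (k := k) (X := X)).Faithful := by
  constructor
  intro G H η θ hηθ
  apply NatTrans.ext
  funext x
  apply FGModuleCat.hom_ext
  apply LinearMap.ext
  intro v
  have key : ∀ (ρ : G ⟶ H), (Fsheaf.map ρ) (Pi.single x v) x = ρ.app x v :=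
    fun ρ => congrArg (fun w => ρ.app x w) (Pi.single_eq_same (M := fun x => (G.obj x : Type _)) x v)
  exact ((key η).symm.trans
    (congrArg (fun (f : Fsheaf.obj G ⟶ Fsheaf.obj H) => f (Pi.single x v) x) hηθ)).trans (key θ)

instance Fsheaf_full : (Fsheaf (k := k) (X := X)).Full := by
  constructor
  intro G H φ₀
  let φ : (∀ x, G.obj x) →ₗ[(IncidenceAlg k X)ᵐᵒᵖ] (∀ x, H.obj x) := φ₀.hom.hom
  have kφ : ∀ (c : k) (m : ∀ x, G.obj x), φ (c • m) = c • φ m := by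
    intro c m
    rw [ksmul_eq_op_smul G c m, map_smul]
    exact (ksmul_eq_op_smul H c (φ m)).symm
  have hsupp : ∀ (x' : X) (v : G.obj x'), φ (Pi.single x' v)
      = Pi.single x' (φ (Pi.single x' v) x') := by
    intro x' v
    have h1 : (MulOpposite.op (IE x' x' le_rfl : IncidenceAlg k X)) • (Pi.single x' v : ∀ x, G.obj x)
        = Pi.single x' v := by
      rw [op_smul_def, MulOpposite.unop_op, actF_IE, Pi.single_eq_same, mapLE_refl]
      rfl
    calc φ (Pi.single x' v) = φ ((MulOpposite.op (IE x' x' le_rfl : IncidenceAlg k X)) • Pi.single x' v) := by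
          rw [h1]
      _ = (MulOpposite.op (IE x' x' le_rfl : IncidenceAlg k X)) • φ (Pi.single x' v) := map_smul φ _ _
      _ = _ := by
          rw [op_smul_def, MulOpposite.unop_op, actF_IE, mapLE_refl]
          rfl
  let app : ∀ x : X, G.obj x →ₗ[k] H.obj x := fun x =>
    { toFun := fun v => φ (Pi.single x v) x
      map_add' := fun v w => by
        show φ (Pi.single x (v + w)) x = φ (Pi.single x v) x + φ (Pi.single x w) x
        rw [Pi.single_add, map_add]; rfl
      map_smul' := fun c v => by
        show φ (Pi.single x (c • v)) x = c • φ (Pi.single x v) x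
        rw [Pi.single_smul, kφ]; rfl }
  have natur : ∀ {y x : X} (f : y ⟶ x), G.map f ≫ (FGModuleCat.ofHom (app x) : G.obj x ⟶ H.obj x)
      = (FGModuleCat.ofHom (app y) : G.obj y ⟶ H.obj y) ≫ H.map f := by
    intro y x f
    apply FGModuleCat.hom_ext
    apply LinearMap.ext
    intro v
    have h : y ≤ x := leOfHom f
    have e1 : (MulOpposite.op (IE y x h : IncidenceAlg k X)) • (Pi.single y v : ∀ x, G.obj x)
        = (Pi.single x (mapLE G h v) : ∀ x, G.obj x) := by
      rw [op_smul_def, MulOpposite.unop_op, actF_IE, Pi.single_eq_same]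
    have e2 := map_smul φ (MulOpposite.op (IE y x h : IncidenceAlg k X)) (Pi.single y v)
    rw [e1] at e2
    have e3 : ((MulOpposite.op (IE y x h : IncidenceAlg k X)) • φ (Pi.single y v)) x
        = mapLE H h (φ (Pi.single y v) y) := by
      rw [op_smul_def, MulOpposite.unop_op, actF_IE, Pi.single_eq_same]
    show φ (Pi.single x (mapLE G h v)) x = mapLE H h (φ (Pi.single y v) y)
    rw [← e3, ← e2]
  refine ⟨{ app := fun x => (FGModuleCat.ofHom (app x) : G.obj x ⟶ H.obj x), naturality := fun _ _ f => natur f }, ?_⟩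
  apply FGModuleCat.hom_ext
  apply LinearMap.ext
  intro m
  show (fun x => φ (Pi.single x (m x)) x) = φ m
  conv_rhs => rw [← Finset.univ_sum_single m, map_sum]
  funext x
  rw [Finset.sum_apply]
  rw [Finset.sum_eq_single x]
  · intro x' _ hx'
    rw [hsupp x' (m x'), Pi.single_eq_of_ne hx'.symm]
  · simp
section EssSurj

open MulOpposite

variable (N : FGModuleCat (IncidenceAlg k X)ᵐᵒᵖ)

noncomputable instance NkMod : Module k N :=
  Module.compHom _ (algebraMap k (IncidenceAlg k X)ᵐᵒᵖ)

lemma Nksmul_def (c : k) (n : N) :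
    c • n = (algebraMap k (IncidenceAlg k X)ᵐᵒᵖ c) • n := rfl

instance Ntower : IsScalarTower k (IncidenceAlg k X)ᵐᵒᵖ N :=
  ⟨fun c a n => by
    rw [Algebra.smul_def, mul_smul]
    rfl⟩

instance IAfinite : Module.Finite k (IncidenceAlg k X) := by
  have : FiniteDimensional k (Matrix X X k) := inferInstance
  exact FiniteDimensional.finiteDimensional_submodule
    (Subalgebra.toSubmodule (IncidenceAlg k X))

instance IAopFinite : Module.Finite k (IncidenceAlg k X)ᵐᵒᵖ :=
  Module.Finite.equiv (MulOpposite.opLinearEquiv k)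

instance NkFinite : FiniteDimensional k N :=
  Module.Finite.trans (IncidenceAlg k X)ᵐᵒᵖ N

lemma Nop_smul_op_smul (a b : IncidenceAlg k X) (n : N) :
    (op b) • ((op a) • n) = op (a * b) • n := by
  rw [← mul_smul, ← MulOpposite.op_mul]

lemma Nsmul_comm (c : k) (a : (IncidenceAlg k X)ᵐᵒᵖ) (n : N) :
    a • (c • n) = c • (a • n) := by
  rw [Nksmul_def, Nksmul_def, ← mul_smul, ← mul_smul, Algebra.commutes]

lemma ksmul_op_smul (c : k) (b : IncidenceAlg k X) (n : N) :
    c • ((op b) • n) = op (c • b) • n := by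
  rw [Nksmul_def]
  rw [show algebraMap k (IncidenceAlg k X)ᵐᵒᵖ c = op (algebraMap k (IncidenceAlg k X) c) from rfl]
  rw [Nop_smul_op_smul]
  congr 1
  rw [← Algebra.commutes, ← Algebra.smul_def]

/-- stalk at x -/
noncomputable def fOp (x : X) : N →ₗ[k] N where
  toFun n := (op (IE x x le_rfl : IncidenceAlg k X)) • n
  map_add' m n := smul_add _ m n
  map_smul' c n := by
    simp only [RingHom.id_apply]
    exact Nsmul_comm N c _ n

noncomputable def Sx (x : X) : Submodule k N := LinearMap.range (fOp N x)

lemma Sx_fix {x : X} {n : N} (hn : n ∈ Sx N x) :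
    (op (IE x x le_rfl : IncidenceAlg k X)) • n = n := by
  obtain ⟨m, rfl⟩ := hn
  show (op (IE x x le_rfl : IncidenceAlg k X)) •
    ((op (IE x x le_rfl : IncidenceAlg k X)) • m) = _
  rw [Nop_smul_op_smul, IE_mul, dif_pos rfl]
  rfl

lemma smul_mem_Sx {x y : X} (h : x ≤ y) (n : N) :
    (op (IE x y h : IncidenceAlg k X)) • n ∈ Sx N y := by
  refine ⟨(op (IE x y h : IncidenceAlg k X)) • n, ?_⟩
  show (op (IE y y le_rfl : IncidenceAlg k X)) • ((op (IE x y h : IncidenceAlg k X)) • n) = _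
  rw [Nop_smul_op_smul, IE_mul, dif_pos rfl]

noncomputable def gmap {x y : X} (h : x ≤ y) : Sx N x →ₗ[k] Sx N y where
  toFun n := ⟨(op (IE x y h : IncidenceAlg k X)) • (n : N), smul_mem_Sx N h n⟩
  map_add' m n := by
    apply Subtype.ext
    show (op (IE x y h : IncidenceAlg k X)) • ((m : N) + n) = _
    rw [smul_add]
    rfl
  map_smul' c n := by
    apply Subtype.ext
    show (op (IE x y h : IncidenceAlg k X)) • (c • (n : N)) = _
    rw [Nsmul_comm]
    rfl

noncomputable def Gb : X ⥤ FGModuleCat k where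
  obj x := FGModuleCat.of k (Sx N x)
  map {x y} f := FGModuleCat.ofHom (gmap N (leOfHom f) : Sx N x →ₗ[k] Sx N y)
  map_id x := by
    apply FGModuleCat.hom_ext
    apply LinearMap.ext
    rintro ⟨n, hn⟩
    apply Subtype.ext
    exact Sx_fix N hn
  map_comp {x y z} f g := by
    apply FGModuleCat.hom_ext
    apply LinearMap.ext
    rintro ⟨n, hn⟩
    apply Subtype.ext
    show (op (IE x z _ : IncidenceAlg k X)) • n
      = (op (IE y z _ : IncidenceAlg k X)) • ((op (IE x y _ : IncidenceAlg k X)) • n)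
    rw [Nop_smul_op_smul, IE_mul, dif_pos rfl]

lemma op_sum_smul {ι : Type} (s : Finset ι) (f : ι → IncidenceAlg k X) (n : N) :
    (op (∑ i ∈ s, f i)) • n = ∑ i ∈ s, (op (f i)) • n := by
  classical
  induction s using Finset.induction with
  | empty => simp
  | insert a s h ih =>
      rw [Finset.sum_insert h, Finset.sum_insert h, MulOpposite.op_add, add_smul, ih]

lemma sum_IE_row (b : IncidenceAlg k X) (y : X) :
    (∑ x, if h : y ≤ x then ((b : Matrix X X k) y x • IE y x h : IncidenceAlg k X) else 0)
      = IE y y le_rfl * b := by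
  apply Subtype.ext
  have hcoe : ((∑ x, if h : y ≤ x then ((b : Matrix X X k) y x • IE y x h : IncidenceAlg k X)
        else 0 : IncidenceAlg k X) : Matrix X X k)
      = ∑ x, if h : y ≤ x then (b : Matrix X X k) y x • Matrix.single y x 1 else 0 := by
    rw [AddSubmonoidClass.coe_finset_sum]
    refine Finset.sum_congr rfl fun x _ => ?_
    split_ifs with h
    · rfl
    · rfl
  rw [hcoe]
  show _ = Matrix.single y y (1:k) * (b : Matrix X X k)
  ext a c
  rw [Matrix.sum_apply]
  by_cases hay : a = y
  · subst hay
    rw [Matrix.single_mul_apply_same, one_mul]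
    rw [Finset.sum_eq_single c]
    · split_ifs with h
      · simp [Matrix.single]
      · exact (b.2 a c h).symm
    · intro x _ hxc
      split_ifs with h
      · simp [Matrix.single, fun hh : x = c => hxc hh]
      · rfl
    · simp
  · rw [Matrix.single_mul_apply_of_ne _ _ _ _ _ hay]
    refine Finset.sum_eq_zero fun x _ => ?_
    split_ifs with h
    · have hz : Matrix.single y x (1:k) a c = 0 := by
        simp only [Matrix.single, Matrix.of_apply, ite_eq_right_iff, and_imp]
        intro hya _
        exact absurd hya.symm hay
      rw [Matrix.smul_apply, hz, smul_zero]
    · rfl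

lemma act_coe (v : ∀ x, (Gb N).obj x) (a : (IncidenceAlg k X)ᵐᵒᵖ) (x : X) :
    ((a • v) x).1
      = ∑ y, if h : y ≤ x then ((a.unop : IncidenceAlg k X) : Matrix X X k) y x •
          ((op (IE y x h : IncidenceAlg k X)) • (v y).1) else 0 := by
  rw [op_smul_def]
  show ((∑ y, if h : y ≤ x then ((a.unop : IncidenceAlg k X) : Matrix X X k) y x •
      mapLE (Gb N) h (v y) else 0 : Sx N x) : N) = _
  rw [AddSubmonoidClass.coe_finset_sum]
  refine Finset.sum_congr rfl fun y _ => ?_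
  split_ifs with h
  · exact congrArg Subtype.val (dif_pos h)
  · exact congrArg Subtype.val (dif_neg h)

noncomputable def betaFun : (∀ x, (Gb N).obj x) →ₗ[(IncidenceAlg k X)ᵐᵒᵖ] N where
  toFun v := ∑ x, (v x).1
  map_add' u v := by
    rw [← Finset.sum_add_distrib]
    exact Finset.sum_congr rfl fun x _ => rfl
  map_smul' a v := by
    simp only [RingHom.id_apply]
    show (∑ x, ((a • v) x).1) = a • ∑ x, (v x).1
    rw [Finset.smul_sum, Finset.sum_congr rfl (fun x _ => act_coe N v a x), Finset.sum_comm]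
    refine Finset.sum_congr rfl fun y _ => ?_
    have h1 : ∀ x : X, (if h : y ≤ x then ((a.unop : IncidenceAlg k X) : Matrix X X k) y x •
          ((op (IE y x h : IncidenceAlg k X)) • (v y).1) else 0)
        = op (if h : y ≤ x then (((a.unop : IncidenceAlg k X) : Matrix X X k) y x •
            IE y x h : IncidenceAlg k X) else 0) • (v y).1 := by
      intro x
      split_ifs with h
      · rw [ksmul_op_smul]
      · rw [MulOpposite.op_zero, zero_smul]
    rw [Finset.sum_congr rfl fun x _ => h1 x, ← op_sum_smul, sum_IE_row,
      ← Nop_smul_op_smul, Sx_fix N (v y).2, MulOpposite.op_unop]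

noncomputable def alphaFun (n : N) : ∀ x, (Gb N).obj x :=
  fun x => ⟨(op (IE x x le_rfl : IncidenceAlg k X)) • n, ⟨n, rfl⟩⟩

lemma beta_alpha (n : N) : betaFun N (alphaFun N n) = n := by
  show (∑ x, (op (IE x x le_rfl : IncidenceAlg k X)) • n) = n
  rw [← op_sum_smul, IE_sum_diag, MulOpposite.op_one, one_smul]

lemma alpha_beta (v : ∀ x, (Gb N).obj x) : alphaFun N (betaFun N v) = v := by
  funext x
  apply Subtype.ext
  show (op (IE x x le_rfl : IncidenceAlg k X)) • (∑ y, (v y).1) = (v x).1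
  rw [Finset.smul_sum, Finset.sum_eq_single x]
  · exact Sx_fix N (v x).2
  · intro y _ hyx
    conv_lhs => rw [← Sx_fix N (v y).2]
    rw [Nop_smul_op_smul, IE_mul, dif_neg hyx, MulOpposite.op_zero, zero_smul]
  · simp

noncomputable def NEquiv : (∀ x, (Gb N).obj x) ≃ₗ[(IncidenceAlg k X)ᵐᵒᵖ] N :=
  { betaFun N with
    invFun := alphaFun N
    left_inv := alpha_beta N
    right_inv := beta_alpha N }

end EssSurj

instance Fsheaf_essSurj : (Fsheaf (k := k) (X := X)).EssSurj := by
  constructor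
  intro N
  refine ⟨Gb N, ⟨?_⟩⟩
  exact
    { hom := (FGModuleCat.ofHom (NEquiv N).toLinearMap : Fsheaf.obj (Gb N) ⟶ N)
      inv := (FGModuleCat.ofHom (NEquiv N).symm.toLinearMap : N ⟶ Fsheaf.obj (Gb N))
      hom_inv_id := by
        apply FGModuleCat.hom_ext
        apply LinearMap.ext
        intro v
        exact (NEquiv N).symm_apply_apply v
      inv_hom_id := by
        apply FGModuleCat.hom_ext
        apply LinearMap.ext
        intro n
        exact (NEquiv N).apply_symm_apply n }

instance Fsheaf_isEquiv : (Fsheaf (k := k) (X := X)).IsEquivalence := {}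

universe u
noncomputable def fgUliftEquiv (R : Type) [Ring R] : FGModuleCat.{0} R ≌ FGModuleCat.{u} R :=
  haveI : (FGModuleCat.ulift R : FGModuleCat.{0} R ⥤ FGModuleCat.{u} R).EssSurj := ⟨fun M => by
    haveI := Module.Finite.small.{0} R M
    exact ⟨FGModuleCat.of R (Shrink.{0} M),
      ⟨((ULift.moduleEquiv (R := R)).trans (Shrink.linearEquiv R M)).toFGModuleCatIso⟩⟩⟩
  haveI : (FGModuleCat.ulift R : FGModuleCat.{0} R ⥤ FGModuleCat.{u} R).IsEquivalence := {}
  (FGModuleCat.ulift R : FGModuleCat.{0} R ⥤ FGModuleCat.{u} R).asEquivalence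

/-- The category of sheaves of finite dimensional `k`-vector spaces on a finite poset `X`
(identified with functors from `X` to finite dimensional `k`-vector spaces) is equivalent to
the category of finite dimensional right modules over the incidence algebra `kX`. -/
theorem sheaves_equiv_modules_incidenceAlg (k : Type) [Field k] (X : Type) [PartialOrder X]
    [Fintype X] [DecidableEq X] :
    Nonempty ((X ⥤ FGModuleCat k) ≌ FGModuleCat (↥(IncidenceAlg k X))ᵐᵒᵖ) := by
  exact ⟨(Fsheaf (k := k) (X := X)).asEquivalence.trans ((fgUliftEquiv _).symm.trans (fgUliftEquiv _))⟩
end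

section
/- Every sheaf of finite-dimensional k-vector spaces on a finite poset X admits a finite filtration whose successive quotients are stalk sheaves (sheaves supported at a single point). -/
open CategoryTheory CategoryTheory.Limits

section Auxiliary

variable {k : Type} [Field k] {X : Type} [PartialOrder X]

/-- The conclusion of the main theorem, as a predicate on `ℱ`. -/
def FiltrationConc (ℱ : X ⥤ ModuleCat k) : Prop :=
  ∃ (n : ℕ) (G : Fin (n + 1) → (X ⥤ ModuleCat k))
    (f : ∀ i : Fin n, G i.castSucc ⟶ G i.succ),
      IsZero (G 0) ∧ Nonempty (G (Fin.last n) ≅ ℱ) ∧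
      ∀ i : Fin n, Mono (f i) ∧
        ∃ x : X, ∀ z : X, (¬ IsZero ((cokernel (f i)).obj z)) ↔ z = x

/-- Pointwise vanishing of a cokernel of a map of sheaves is surjectivity on stalks. -/
lemma coker_obj_isZero_iff {F G : X ⥤ ModuleCat k} (φ : F ⟶ G) (z : X) :
    IsZero ((cokernel φ).obj z) ↔ Function.Surjective (φ.app z) := by
  have e : (cokernel φ).obj z ≅ cokernel (φ.app z) :=
    PreservesCokernel.iso ((evaluation X (ModuleCat k)).obj z) φ
  have e2 : cokernel (φ.app z) ≅ ModuleCat.of k ((G.obj z) ⧸ LinearMap.range (φ.app z).hom) :=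
    ModuleCat.cokernelIsoRangeQuotient (φ.app z)
  constructor
  · intro h
    have h2 : IsZero (ModuleCat.of k ((G.obj z) ⧸ LinearMap.range (φ.app z).hom)) :=
      h.of_iso (e ≪≫ e2).symm
    have : Subsingleton ((G.obj z) ⧸ LinearMap.range (φ.app z).hom) := by
      constructor
      intro a b
      have := h2.eq_of_src (𝟙 _) 0
      calc a = (𝟙 (ModuleCat.of k ((G.obj z) ⧸ LinearMap.range (φ.app z).hom))) a := rfl
        _ = (0 : ModuleCat.of k _ ⟶ ModuleCat.of k _) a := by rw [this]
        _ = (0 : ModuleCat.of k _ ⟶ ModuleCat.of k _) b := rfl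
        _ = (𝟙 (ModuleCat.of k ((G.obj z) ⧸ LinearMap.range (φ.app z).hom))) b := by rw [this]
        _ = b := rfl
    rw [← LinearMap.range_eq_top]
    exact (Submodule.Quotient.subsingleton_iff).mp this
  · intro h
    have : LinearMap.range (φ.app z).hom = ⊤ := LinearMap.range_eq_top.mpr h
    have hs : Subsingleton ((G.obj z) ⧸ LinearMap.range (φ.app z).hom) :=
      (Submodule.Quotient.subsingleton_iff).mpr this
    exact (@ModuleCat.isZero_of_subsingleton k _ (ModuleCat.of k _) hs).of_iso (e ≪≫ e2)

lemma surj_comp_iso3 {A B C D : ModuleCat k} (a : A ⟶ B) (g : B ⟶ C) (c : C ⟶ D)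
    [IsIso a] [IsIso c] :
    Function.Surjective (a ≫ g ≫ c) ↔ Function.Surjective g := by
  rw [← ModuleCat.epi_iff_surjective, ← ModuleCat.epi_iff_surjective]
  constructor
  · intro h
    have h1 : Epi (g ≫ c) := epi_of_epi a (g ≫ c)
    have h2 : g = (g ≫ c) ≫ inv c := by simp
    rw [h2]
    infer_instance
  · intro h
    infer_instance

lemma surj_comp_iso4 {A B C D E : ModuleCat k} (a : A ⟶ B) (b : B ⟶ C) (g : C ⟶ D) (c : D ⟶ E)
    [IsIso a] [IsIso b] [IsIso c] :
    Function.Surjective (a ≫ b ≫ g ≫ c) ↔ Function.Surjective g := by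
  rw [show a ≫ b ≫ g ≫ c = (a ≫ b) ≫ g ≫ c by simp]
  exact surj_comp_iso3 (a ≫ b) g c

/-- The submodule of the stalk of `ℱ` at `z` used to define the subsheaf attached to an
upward-closed set `P`. -/
noncomputable def subMod (ℱ : X ⥤ ModuleCat k) (P : X → Prop) (z : X) : Submodule k (ℱ.obj z) :=
  open scoped Classical in if P z then ⊤ else ⊥

lemma map_subMod (ℱ : X ⥤ ModuleCat k) (P : X → Prop)
    (hP : ∀ ⦃z w : X⦄, z ≤ w → P z → P w) {z w : X} (h : z ⟶ w) :
    ∀ v ∈ subMod ℱ P z, ℱ.map h v ∈ subMod ℱ P w := by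
  intro v hv
  unfold subMod at *
  by_cases hz : P z
  · have hw : P w := hP (leOfHom h) hz
    simp [hw]
  · simp only [hz, if_false] at hv
    simp only [Submodule.mem_bot] at hv
    subst hv
    simp [map_zero]

/-- The subsheaf of `ℱ` attached to an upward-closed set `P`: it has the full stalk over points
of `P` and the zero stalk elsewhere. -/
noncomputable def subF (ℱ : X ⥤ ModuleCat k) (P : X → Prop)
    (hP : ∀ ⦃z w : X⦄, z ≤ w → P z → P w) : X ⥤ ModuleCat k where
  obj z := ModuleCat.of k (subMod ℱ P z)
  map {z w} h := ModuleCat.ofHom ((ℱ.map h).hom.restrict (map_subMod ℱ P hP h))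
  map_id z := by
    ext v
    simp only [ModuleCat.hom_ofHom, LinearMap.restrict_coe_apply, ℱ.map_id]
    rfl
  map_comp {z w u} h g := by
    ext v
    simp only [ℱ.map_comp]
    rfl

/-- The inclusion of the subsheaf attached to an upward-closed set. -/
noncomputable def subι (ℱ : X ⥤ ModuleCat k) (P : X → Prop)
    (hP : ∀ ⦃z w : X⦄, z ≤ w → P z → P w) : subF ℱ P hP ⟶ ℱ where
  app z := ModuleCat.ofHom (subMod ℱ P z).subtype
  naturality z w h := by
    ext v
    rfl

instance (ℱ : X ⥤ ModuleCat k) (P : X → Prop)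
    (hP : ∀ ⦃z w : X⦄, z ≤ w → P z → P w) : Mono (subι ℱ P hP) := by
  have : ∀ z, Mono ((subι ℱ P hP).app z) := by
    intro z
    rw [ModuleCat.mono_iff_injective]
    exact Subtype.val_injective
  exact NatTrans.mono_of_mono_app _

lemma subι_surj_iff (ℱ : X ⥤ ModuleCat k) (P : X → Prop)
    (hP : ∀ ⦃z w : X⦄, z ≤ w → P z → P w) (z : X) :
    Function.Surjective ((subι ℱ P hP).app z) ↔ (P z ∨ Subsingleton (ℱ.obj z)) := by
  constructor
  · intro hs
    by_cases hz : P z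
    · exact Or.inl hz
    · refine Or.inr ?_
      constructor
      intro a b
      obtain ⟨⟨va, hva⟩, rfl⟩ := hs a
      obtain ⟨⟨vb, hvb⟩, rfl⟩ := hs b
      simp only [subMod, hz, if_false, Submodule.mem_bot] at hva hvb
      subst hva; subst hvb; rfl
  · rintro (hz | hz)
    · intro v
      exact ⟨⟨v, by simp [subMod, hz]⟩, rfl⟩
    · intro v
      refine ⟨⟨0, by simp [subMod]⟩, ?_⟩
      exact Subsingleton.elim _ _

/-- Extending a filtration of a subsheaf `ℱ' ⊆ ℱ` whose quotient is a stalk sheaf at `x`. -/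
lemma filtrationConc_extend {ℱ' ℱ : X ⥤ ModuleCat k} (ι : ℱ' ⟶ ℱ) [Mono ι] (x : X)
    (hx : ∀ z, ¬ Function.Surjective (ι.app z) ↔ z = x) (h : FiltrationConc ℱ') :
    FiltrationConc ℱ := by
  obtain ⟨n, G, f, h0, ⟨e⟩, hf⟩ := h
  have hG1 : ∀ j : Fin (n + 1), (Fin.snoc G ℱ : Fin (n + 2) → _) j.castSucc = G j :=
    fun j => Fin.snoc_castSucc _ _ _
  have hG2 : (Fin.snoc G ℱ : Fin (n + 2) → _) (Fin.last (n + 1)) = ℱ := Fin.snoc_last _ _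
  refine ⟨n + 1, Fin.snoc G ℱ,
    fun i => Fin.lastCases
      (eqToHom (hG1 (Fin.last n)) ≫ e.hom ≫ ι ≫
        eqToHom (by rw [Fin.succ_last]; exact hG2.symm))
      (fun j => eqToHom (hG1 j.castSucc) ≫ f j ≫
        eqToHom (by rw [Fin.succ_castSucc]; exact (hG1 j.succ).symm)) i,
    ?_, ⟨eqToIso hG2⟩, ?_⟩
  · have h00 : (Fin.snoc G ℱ : Fin (n + 2) → _) 0 = G 0 := by
      rw [← Fin.castSucc_zero]; exact hG1 0
    rw [h00]; exact h0
  · intro i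
    refine Fin.lastCases ?_ ?_ i
    · simp only [Fin.lastCases_last]
      constructor
      · infer_instance
      · refine ⟨x, fun z => ?_⟩
        rw [coker_obj_isZero_iff, NatTrans.comp_app, NatTrans.comp_app, NatTrans.comp_app,
          surj_comp_iso4, hx]
    · intro j
      simp only [Fin.lastCases_castSucc]
      obtain ⟨hm, x', hx'⟩ := hf j
      constructor
      · infer_instance
      · refine ⟨x', fun z => ?_⟩
        rw [coker_obj_isZero_iff, NatTrans.comp_app, NatTrans.comp_app,
          surj_comp_iso3, ← coker_obj_isZero_iff]
        exact hx' z

/-- The support of a sheaf on a finite poset, as a finset. -/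
noncomputable def sheafSupp [Fintype X] (ℱ : X ⥤ ModuleCat k) : Finset X :=
  @Finset.filter _ (fun z => ¬ Subsingleton (ℱ.obj z)) (fun _ => Classical.dec _) Finset.univ

lemma mem_sheafSupp [Fintype X] (ℱ : X ⥤ ModuleCat k) (z : X) :
    z ∈ sheafSupp ℱ ↔ ¬ Subsingleton (ℱ.obj z) := by
  simp [sheafSupp]

lemma filtrationConc_aux [Fintype X] (N : ℕ) :
    ∀ ℱ : X ⥤ ModuleCat k, (sheafSupp ℱ).card ≤ N → FiltrationConc ℱ := by
  induction N with
  | zero =>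
    intro ℱ hc
    have hc0 : sheafSupp ℱ = ∅ := Finset.card_eq_zero.mp (Nat.le_zero.mp hc)
    have hs : ∀ z : X, Subsingleton (ℱ.obj z) := by
      intro z
      by_contra h
      have : z ∈ sheafSupp ℱ := (mem_sheafSupp ℱ z).mpr h
      simp [hc0] at this
    have hz : IsZero ℱ := Functor.isZero _ (fun z => @ModuleCat.isZero_of_subsingleton k _ _ (hs z))
    exact ⟨0, fun _ => ℱ, Fin.elim0, hz, ⟨Iso.refl _⟩, fun i => i.elim0⟩
  | succ N ih =>
    intro ℱ hc
    by_cases hN : (sheafSupp ℱ).card ≤ N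
    · exact ih ℱ hN
    · classical
      have hne : (sheafSupp ℱ).Nonempty := by
        rw [← Finset.card_pos]; omega
      obtain ⟨x, hxs, hxmin⟩ : ∃ m ∈ sheafSupp ℱ, ∀ t ∈ sheafSupp ℱ, ¬ t < m := by
        obtain ⟨m, hm⟩ := Finset.exists_minimal hne
        exact ⟨m, hm.1, fun t ht hlt => hm.not_lt ht hlt⟩
      set P : X → Prop := fun z => ∃ t, t ∈ sheafSupp ℱ ∧ t ≠ x ∧ t ≤ z with hPdef
      have hP : ∀ ⦃z w : X⦄, z ≤ w → P z → P w := by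
        rintro z w hzw ⟨t, ht, htx, htz⟩
        exact ⟨t, ht, htx, htz.trans hzw⟩
      have hPx : ¬ P x := by
        rintro ⟨t, ht, htx, htle⟩
        exact hxmin t ht (lt_of_le_of_ne htle htx)
      have key : ∀ z, ¬ Function.Surjective ((subι ℱ P hP).app z) ↔ z = x := by
        intro z
        rw [subι_surj_iff]
        constructor
        · intro h
          push_neg at h
          obtain ⟨h1, h2⟩ := h
          by_contra hzx
          exact h1 ⟨z, (mem_sheafSupp ℱ z).mpr (not_subsingleton_iff_nontrivial.mpr h2), hzx, le_refl z⟩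
        · intro hzx
          rw [hzx]
          rintro (h | h)
          · exact hPx h
          · exact (mem_sheafSupp ℱ x).mp hxs h
      have hsub : sheafSupp (subF ℱ P hP) ⊆ (sheafSupp ℱ).erase x := by
        intro z hz
        rw [mem_sheafSupp] at hz
        have hPz : P z := by
          by_contra hPz
          apply hz
          show Subsingleton (subMod ℱ P z)
          have : subMod ℱ P z = ⊥ := by simp [subMod, hPz]
          rw [this]
          infer_instance
        have hzs : ¬ Subsingleton (ℱ.obj z) := by
          intro hss
          apply hz
          show Subsingleton (subMod ℱ P z)
          exact ⟨fun a b => Subtype.ext (Subsingleton.elim _ _)⟩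
        have hzx : z ≠ x := by
          rintro rfl
          exact hPx hPz
        exact Finset.mem_erase.mpr ⟨hzx, (mem_sheafSupp ℱ z).mpr hzs⟩
      have hcard : (sheafSupp (subF ℱ P hP)).card ≤ N := by
        have := Finset.card_le_card hsub
        rw [Finset.card_erase_of_mem hxs] at this
        omega
      exact filtrationConc_extend (subι ℱ P hP) x key (ih _ hcard)

end Auxiliary

/-- Every sheaf of finite dimensional vector spaces on a finite poset (i.e. functor
`X ⥤ ModuleCat k` with finite dimensional values) admits a finite filtration
`0 = G₀ ↪ G₁ ↪ … ↪ Gₙ ≅ ℱ` whose successive quotients are stalk sheaves, i.e. are supported at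
exactly one point. -/
theorem sheaf_filtration_stalk_quotients (k : Type) [Field k] (X : Type) [PartialOrder X]
    [Fintype X] (ℱ : X ⥤ ModuleCat k) (hfd : ∀ x : X, FiniteDimensional k (ℱ.obj x)) :
    ∃ (n : ℕ) (G : Fin (n + 1) → (X ⥤ ModuleCat k))
      (f : ∀ i : Fin n, G i.castSucc ⟶ G i.succ),
        IsZero (G 0) ∧ Nonempty (G (Fin.last n) ≅ ℱ) ∧
        ∀ i : Fin n, Mono (f i) ∧
          ∃ x : X, ∀ z : X, (¬ IsZero ((cokernel (f i)).obj z)) ↔ z = x := by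
  exact filtrationConc_aux (sheafSupp ℱ).card ℱ le_rfl
end
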